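/- arXiv:2404.01613 — 4 statements merged into one kernel-verified Lean document; each statement's English description precedes it below -/
import Mathlib

section
/- Let p, q ≥ 1 and consider the deterministic ARMA recursion y_i = a_1 y_{i−1} + ⋯ + a_p y_{i−p} + b_1 u_i + ⋯ + b_q u_{i−q+1}, where a_p ≠ 0, all roots of 1 − a_1 z − ⋯ − a_p z^p lie outside the unit circle, and the polynomials 1 − z A(z) and B(z) have no common roots. Suppose the input satisfies: there exist δ₁ > 0 and an integer m > 0 such that (1/m) ∑_{i=k}^{k+m−1} U_i U_iᵀ ≥ δ₁ I_{p+q} for all k ≥ 1, where U_i = [u_i, u_{i−1}, …, u_{i−p−q+1}]ᵀ. Then there exists a constant c₀ > 0 such that λ_min(∑_{i=k}^{k+p+m−1} φ_i φ_iᵀ) ≥ c₀ δ₁ for all k > 0, where φ_i = [y_{i−1}, …, y_{i−p}, u_i, …, u_{i−q+1}]ᵀ; consequently, with N = p + m and δ = c₀δ₁/N, one has (1/N) ∑_{i=k}^{k+N−1} φ_i φ_iᵀ ≥ δ I_{p+q} for all k > 0. -/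
/-!
Let `z` be the delay and split `x ∈ ℝ^{p+q}` as `(α, β)`, so that `x ⬝ φ_i = (z α(z) y + β(z) u)_i`.
Filtering this signal by `1 - z A(z)` and using the recursion `(1 - z A(z)) y = B(z) u` eliminates
`y`: the filtered signal at time `i` is `c(x) ⬝ U_i`, where `c(x)` is the coefficient vector of
`z α(z) B(z) + (1 - z A(z)) β(z)`, a polynomial of degree `< p + q`. Since `1 - z A(z)` has degree
exactly `p`, does not vanish at `0` and is coprime to `B`, the map `x ↦ c(x)` is injective, so
`|x|² ≤ K |c(x)|²`. Persistent excitation of `u` bounds `m δ₁ |c(x)|²` by the sum of `m`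
consecutive squared filtered values, and by Cauchy–Schwarz each filtered value is controlled by
`p + 1` consecutive values of `x ⬝ φ`. Altogether
`(m δ₁ / (D K)) |x|² ≤ ∑_{l < p+m} (x ⬝ φ_{k+l})²` with `D = (p + 1) ∑ (coefficients of 1 - z A(z))²`.
-/

open Matrix Polynomial

namespace Matrix

lemma PosSemidef.one_div_smul_sub_div_smul_one {n : Type*} [DecidableEq n] {M : Matrix n n ℝ}
    {d : ℝ} (h : (M - d • 1).PosSemidef) {N : ℝ} (hN : 0 ≤ N) :
    ((1 / N) • M - (d / N) • 1).PosSemidef := by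
  convert h.smul (one_div_nonneg.mpr hN) using 1
  rw [smul_sub, smul_smul, div_eq_mul_one_div d, mul_comm d]

variable {ι n : Type*} [Fintype n]

lemma posSemidef_sub_smul_one_iff [DecidableEq n] {M : Matrix n n ℝ} (hM : M.IsHermitian)
    (d : ℝ) : (M - d • 1).PosSemidef ↔ ∀ x, d * (x ⬝ᵥ x) ≤ x ⬝ᵥ (M *ᵥ x) := by
  simp only [posSemidef_iff_dotProduct_mulVec, hM.sub (isHermitian_one.smul (.all d)),
    true_and, star_trivial, sub_mulVec, dotProduct_sub, smul_mulVec, one_mulVec,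
    dotProduct_smul, smul_eq_mul, sub_nonneg]

lemma isHermitian_sum_vecMulVec_self (s : Finset ι) (w : ι → n → ℝ) :
    (∑ l ∈ s, vecMulVec (w l) (w l)).IsHermitian :=
  (posSemidef_sum s fun l _ => by simpa using posSemidef_vecMulVec_self_star (w l)).isHermitian

lemma dotProduct_sum_vecMulVec_self_mulVec (s : Finset ι) (w : ι → n → ℝ) (x : n → ℝ) :
    x ⬝ᵥ ((∑ l ∈ s, vecMulVec (w l) (w l)) *ᵥ x) = ∑ l ∈ s, (w l ⬝ᵥ x) ^ 2 := by
  simp [Matrix.sum_mulVec, sum_dotProduct, vecMulVec_mulVec, dotProduct_comm x, sq]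

lemma mulVec_dotProduct_mulVec_le {κ : Type*} [Fintype κ] (M : Matrix κ n ℝ) (x : n → ℝ) :
    (M *ᵥ x) ⬝ᵥ (M *ᵥ x) ≤ (∑ i, ∑ j, M i j ^ 2) * (x ⬝ᵥ x) := by
  simp only [dotProduct, mulVec, ← sq]
  rw [Finset.sum_mul]
  exact Finset.sum_le_sum fun i _ => Finset.sum_mul_sq_le_sq_mul_sq _ _ _

lemma exists_dotProduct_self_le_of_injective {κ : Type*} [Fintype κ] [DecidableEq κ]
    (f : (n → ℝ) →ₗ[ℝ] (κ → ℝ)) (hf : Function.Injective f) :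
    ∃ K > 0, ∀ x, x ⬝ᵥ x ≤ K * (f x ⬝ᵥ f x) := by
  obtain ⟨g, hg⟩ := f.exists_leftInverse_of_injective (LinearMap.ker_eq_bot.mpr hf)
  set M := LinearMap.toMatrix' g
  refine ⟨∑ i, ∑ j, M i j ^ 2 + 1, by positivity, fun x => ?_⟩
  have hx : M *ᵥ f x = x := by
    rw [LinearMap.toMatrix'_mulVec, ← LinearMap.comp_apply, hg, LinearMap.id_apply]
  have hfx : 0 ≤ f x ⬝ᵥ f x := Finset.sum_nonneg fun i _ => mul_self_nonneg _
  calc x ⬝ᵥ x = (M *ᵥ f x) ⬝ᵥ (M *ᵥ f x) := by rw [hx]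
    _ ≤ (∑ i, ∑ j, M i j ^ 2) * (f x ⬝ᵥ f x) := mulVec_dotProduct_mulVec_le M (f x)
    _ ≤ _ := by linarith

end Matrix

section Delay
variable {R : Type*} [CommRing R]

/-- The delay operator `z` on signals; a polynomial `P(z)` acts on a signal as `aeval delay P`. -/
def delay : (ℤ → R) →ₗ[R] (ℤ → R) := LinearMap.funLeft R R (· - 1)

lemma delay_pow_apply (n : ℕ) (u : ℤ → R) (i : ℤ) : (delay ^ n) u i = u (i - n) := by
  induction n generalizing i with
  | zero => simp
  | succ n ih =>
    rw [pow_succ', Module.End.mul_apply, delay, LinearMap.funLeft_apply, ← delay, ih]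
    push_cast
    ring_nf

lemma aeval_delay_apply {n : ℕ} {P : R[X]} (hP : P.natDegree < n) (u : ℤ → R) (i : ℤ) :
    aeval delay P u i = ∑ r ∈ Finset.range n, P.coeff r * u (i - r) := by
  simp [aeval_eq_sum_range' hP, LinearMap.sum_apply, delay_pow_apply]

lemma aeval_delay_sum_C_mul_X_pow_apply {ι : Type*} (s : Finset ι) (c : ι → R) (d : ι → ℕ)
    (u : ℤ → R) (i : ℤ) :
    aeval delay (∑ t ∈ s, C (c t) * X ^ d t) u i = ∑ t ∈ s, c t * u (i - d t) := by
  simp [LinearMap.sum_apply, Finset.sum_apply, delay_pow_apply]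

lemma aeval_delay_add_of_aeval_delay_eq {A B P Q : R[X]} {y u : ℤ → R}
    (hy : aeval delay A y = aeval delay B u) :
    aeval delay A (aeval delay P y + aeval delay Q u) = aeval delay (P * B + A * Q) u := by
  rw [map_add, ← Module.End.mul_apply, ← map_mul, mul_comm, map_mul, Module.End.mul_apply, hy,
    ← Module.End.mul_apply (aeval delay A), ← Module.End.mul_apply, ← map_mul, ← map_mul,
    ← LinearMap.add_apply, ← map_add]

end Delay

lemma sum_range_add_le_sum_range {f : ℕ → ℝ} (hf : ∀ i, 0 ≤ f i) {c n : ℕ} (hc : c ≤ n)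
    (m : ℕ) : ∑ l ∈ Finset.range m, f (c + l) ≤ ∑ l ∈ Finset.range (n + m), f l := by
  rw [← Nat.add_sub_cancel_left (n := c) (m := m), ← Finset.sum_Ico_eq_sum_range]
  exact Finset.sum_le_sum_of_subset_of_nonneg
    (fun l hl => by simp only [Finset.mem_Ico, Finset.mem_range] at hl ⊢; omega) fun i _ _ => hf i

lemma sum_sq_aeval_delay_le (P : ℝ[X]) {n : ℕ} (hP : P.natDegree ≤ n) (e : ℤ → ℝ) (k : ℤ)
    (m : ℕ) :
    ∑ l ∈ Finset.range m, (aeval delay P e (k + n + l)) ^ 2 ≤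
      ((n + 1) * ∑ r ∈ Finset.range (n + 1), P.coeff r ^ 2) *
        ∑ l ∈ Finset.range (n + m), e (k + l) ^ 2 := by
  set S := ∑ r ∈ Finset.range (n + 1), P.coeff r ^ 2
  set W := ∑ l ∈ Finset.range (n + m), e (k + l) ^ 2
  have hwindow : ∀ r ∈ Finset.range (n + 1),
      ∑ l ∈ Finset.range m, e (k + n + l - r) ^ 2 ≤ W := fun r hr => by
    have hr : r ≤ n := Nat.lt_succ_iff.mp (Finset.mem_range.mp hr)
    convert sum_range_add_le_sum_range (f := fun l => e (k + l) ^ 2) (fun _ => sq_nonneg _)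
      (Nat.sub_le n r) m using 4 with l
    push_cast [hr]
    ring
  calc ∑ l ∈ Finset.range m, (aeval delay P e (k + n + l)) ^ 2
      ≤ ∑ l ∈ Finset.range m, S * ∑ r ∈ Finset.range (n + 1), e (k + n + l - r) ^ 2 := by
        gcongr with l
        rw [aeval_delay_apply (Nat.lt_succ_of_le hP)]
        exact Finset.sum_mul_sq_le_sq_mul_sq _ _ _
    _ = S * ∑ r ∈ Finset.range (n + 1), ∑ l ∈ Finset.range m, e (k + n + l - r) ^ 2 := by
        rw [← Finset.mul_sum, Finset.sum_comm]
    _ ≤ S * ∑ r ∈ Finset.range (n + 1), W := by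
        gcongr with r hr
        exact hwindow r hr
    _ = (n + 1) * S * W := by
        simp only [Finset.sum_const, Finset.card_range, nsmul_eq_mul, Nat.cast_add, Nat.cast_one]
        ring

lemma eq_zero_of_mul_add_mul_eq_zero {R : Type*} [CommRing R] [IsDomain R] {A B f g : R[X]}
    (hAB : IsCoprime A B) (hA : A.coeff 0 ≠ 0) (hf0 : f.coeff 0 = 0)
    (hf : f.natDegree ≤ A.natDegree) (h : f * B + A * g = 0) : f = 0 ∧ g = 0 := by
  have hA0 : A ≠ 0 := fun h => hA (by simp [h])
  obtain ⟨c, rfl⟩ : A ∣ f := hAB.dvd_of_dvd_mul_right ⟨-g, by linear_combination h⟩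
  obtain rfl : c = 0 := by
    by_contra hc
    rw [natDegree_mul hA0 hc] at hf
    rw [eq_C_of_natDegree_eq_zero (by omega : c.natDegree = 0), coeff_mul_C] at hf0
    rw [eq_C_of_natDegree_eq_zero (by omega : c.natDegree = 0),
      (mul_eq_zero.mp hf0).resolve_left hA, C_0] at hc
    exact hc rfl
  simpa [hA0] using h

lemma natDegree_sum_C_mul_X_pow_le {R ι : Type*} [Semiring R] (s : Finset ι) (c : ι → R)
    (e : ι → ℕ) {d : ℕ} (he : ∀ i ∈ s, e i ≤ d) : (∑ i ∈ s, C (c i) * X ^ e i).natDegree ≤ d :=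
  natDegree_sum_le_of_forall_le _ _ fun i hi => (natDegree_C_mul_X_pow_le _ _).trans (he i hi)

section ARMA
variable {p q : ℕ}

/- In the notation of the paper, `arPoly a = 1 - z A(z)`, `maPoly b = B(z)`, and for
`x = (α, β) ∈ ℝ^p × ℝ^q` one has `regressorPolyY x = z α(z)`, `regressorPolyU x = β(z)`. -/
noncomputable def arPoly (a : Fin p → ℝ) : ℝ[X] := 1 - ∑ t : Fin p, C (a t) * X ^ ((t : ℕ) + 1)

noncomputable def maPoly (b : Fin q → ℝ) : ℝ[X] := ∑ j : Fin q, C (b j) * X ^ (j : ℕ)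

noncomputable def regressorPolyY (x : Fin (p + q) → ℝ) : ℝ[X] :=
  ∑ j : Fin p, C (x (Fin.castAdd q j)) * X ^ ((j : ℕ) + 1)

noncomputable def regressorPolyU (x : Fin (p + q) → ℝ) : ℝ[X] :=
  ∑ j : Fin q, C (x (Fin.natAdd p j)) * X ^ (j : ℕ)

noncomputable def transferPoly (a : Fin p → ℝ) (b : Fin q → ℝ) :
    (Fin (p + q) → ℝ) →ₗ[ℝ] ℝ[X] where
  toFun x := regressorPolyY x * maPoly b + arPoly a * regressorPolyU x
  map_add' x x' := by
    simp only [regressorPolyY, regressorPolyU, Pi.add_apply, C_add, add_mul,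
      Finset.sum_add_distrib]
    ring
  map_smul' c x := by
    simp only [regressorPolyY, regressorPolyU, Pi.smul_apply, smul_eq_mul, C_mul, mul_assoc,
      ← Finset.mul_sum, RingHom.id_apply, smul_eq_C_mul]
    ring

noncomputable def transferCoeffs (a : Fin p → ℝ) (b : Fin q → ℝ) :
    (Fin (p + q) → ℝ) →ₗ[ℝ] (Fin (p + q) → ℝ) :=
  LinearMap.pi fun r => (lcoeff ℝ r).comp (transferPoly a b)

lemma transferPoly_apply (a : Fin p → ℝ) (b : Fin q → ℝ) (x : Fin (p + q) → ℝ) :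
    transferPoly a b x = regressorPolyY x * maPoly b + arPoly a * regressorPolyU x := rfl

lemma natDegree_arPoly_le (a : Fin p → ℝ) : (arPoly a).natDegree ≤ p :=
  (natDegree_sub_le _ _).trans
    (max_le (by simp) (natDegree_sum_C_mul_X_pow_le _ _ _ fun t _ => t.2))

lemma natDegree_arPoly (a : Fin p → ℝ) (hp : 1 ≤ p) (hap : a ⟨p - 1, by omega⟩ ≠ 0) :
    (arPoly a).natDegree = p := by
  refine le_antisymm (natDegree_arPoly_le a) (le_natDegree_of_ne_zero ?_)
  rw [arPoly, coeff_sub, finsetSum_coeff, Finset.sum_eq_single ⟨p - 1, by omega⟩]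
  · simpa [coeff_X_pow, coeff_one, Nat.sub_add_cancel hp, Nat.one_le_iff_ne_zero.mp hp]
      using hap
  · intro t _ ht
    simp only [coeff_C_mul, coeff_X_pow, mul_ite, mul_one, mul_zero, ite_eq_right_iff]
    exact fun h => absurd (Fin.ext (by simp; omega)) ht
  · simp

lemma coeff_arPoly_zero (a : Fin p → ℝ) : (arPoly a).coeff 0 = 1 := by
  simp [arPoly, coeff_X_pow]

lemma sum_sq_coeff_arPoly_pos (a : Fin p → ℝ) :
    0 < ∑ r ∈ Finset.range (p + 1), (arPoly a).coeff r ^ 2 := by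
  refine lt_of_lt_of_le ?_ (Finset.single_le_sum (fun r _ => sq_nonneg ((arPoly a).coeff r))
    (Finset.mem_range.mpr p.succ_pos))
  simp [coeff_arPoly_zero]

lemma natDegree_transferPoly_lt (a : Fin p → ℝ) (b : Fin q → ℝ) (hq : 1 ≤ q)
    (x : Fin (p + q) → ℝ) : (transferPoly a b x).natDegree < p + q := by
  have hB : (maPoly b).natDegree ≤ q - 1 :=
    natDegree_sum_C_mul_X_pow_le _ _ _ fun j _ => by omega
  have hY : (regressorPolyY x).natDegree ≤ p :=
    natDegree_sum_C_mul_X_pow_le _ _ _ fun t _ => t.2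
  have hU : (regressorPolyU x).natDegree ≤ q - 1 :=
    natDegree_sum_C_mul_X_pow_le _ _ _ fun j _ => by omega
  rw [transferPoly_apply]
  refine (natDegree_add_le _ _).trans_lt (max_lt ?_ ?_)
  · exact (natDegree_mul_le.trans (add_le_add hY hB)).trans_lt (by omega)
  · exact (natDegree_mul_le.trans (add_le_add (natDegree_arPoly_le a) hU)).trans_lt (by omega)

lemma eq_zero_of_regressorPolyY_eq_zero_of_regressorPolyU_eq_zero {x : Fin (p + q) → ℝ}
    (hY : regressorPolyY x = 0) (hU : regressorPolyU x = 0) : x = 0 := by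
  funext i
  refine Fin.addCases (fun j => ?_) (fun j => ?_) i
  · simpa [regressorPolyY, finsetSum_coeff, coeff_X_pow, Fin.val_inj] using
      congrArg (coeff · ((j : ℕ) + 1)) hY
  · simpa [regressorPolyU, finsetSum_coeff, coeff_X_pow, Fin.val_inj] using
      congrArg (coeff · (j : ℕ)) hU

lemma isCoprime_arPoly_maPoly (a : Fin p → ℝ) (b : Fin q → ℝ)
    (h : ¬ ∃ z : ℂ, (1 - ∑ i : Fin p, (a i : ℂ) * z ^ ((i : ℕ) + 1)) = 0 ∧
        (∑ j : Fin q, (b j : ℂ) * z ^ (j : ℕ)) = 0) :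
    IsCoprime (arPoly a) (maPoly b) := by
  refine (isCoprime_iff_aeval_ne_zero_of_isAlgClosed ℝ ℂ _ _).mpr fun z => ?_
  simpa [arPoly, maPoly, ← not_and_or] using fun h' => h ⟨z, h'⟩

lemma transferPoly_injective (a : Fin p → ℝ) (b : Fin q → ℝ)
    (hAB : IsCoprime (arPoly a) (maPoly b)) (hdeg : (arPoly a).natDegree = p) :
    Function.Injective (transferPoly a b) := by
  rw [← LinearMap.ker_eq_bot, LinearMap.ker_eq_bot']
  intro x hx
  obtain ⟨hY, hU⟩ := eq_zero_of_mul_add_mul_eq_zero (f := regressorPolyY x) hAB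
    (by simp [coeff_arPoly_zero]) (by simp [regressorPolyY, finsetSum_coeff, coeff_X_pow])
    ((natDegree_sum_C_mul_X_pow_le _ _ _ fun t _ => t.2).trans hdeg.ge) hx
  exact eq_zero_of_regressorPolyY_eq_zero_of_regressorPolyU_eq_zero hY hU

lemma transferCoeffs_injective (a : Fin p → ℝ) (b : Fin q → ℝ) (hq : 1 ≤ q)
    (hAB : IsCoprime (arPoly a) (maPoly b)) (hdeg : (arPoly a).natDegree = p) :
    Function.Injective (transferCoeffs a b) := by
  intro x x' h
  refine transferPoly_injective a b hAB hdeg (Polynomial.ext fun r => ?_)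
  rcases lt_or_ge r (p + q) with hr | hr
  · simpa [transferCoeffs] using congrFun h ⟨r, hr⟩
  · rw [coeff_eq_zero_of_natDegree_lt ((natDegree_transferPoly_lt a b hq x).trans_le hr),
      coeff_eq_zero_of_natDegree_lt ((natDegree_transferPoly_lt a b hq x').trans_le hr)]

variable {a : Fin p → ℝ} {b : Fin q → ℝ} {u y : ℤ → ℝ}

lemma aeval_delay_arPoly_eq (hy : ∀ k : ℤ, y k = ∑ i : Fin p, a i * y (k - ((i : ℕ) + 1))
        + ∑ j : Fin q, b j * u (k - (j : ℕ))) :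
    aeval delay (arPoly a) y = aeval delay (maPoly b) u := by
  funext k
  simp only [arPoly, maPoly, map_sub, map_one, LinearMap.sub_apply, Pi.sub_apply,
    Module.End.one_apply, aeval_delay_sum_C_mul_X_pow_apply]
  push_cast
  linarith [hy k]

lemma dotProduct_regressor {φ : ℤ → Fin (p + q) → ℝ}
    (hφ : ∀ (i : ℤ) (j : Fin (p + q)),
      φ i j = if (j : ℕ) < p then y (i - ((j : ℕ) + 1)) else u (i - ((j : ℕ) - p)))
    (x : Fin (p + q) → ℝ) (i : ℤ) :
    φ i ⬝ᵥ x = (aeval delay (regressorPolyY x) y + aeval delay (regressorPolyU x) u) i := by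
  simp only [regressorPolyY, regressorPolyU, Pi.add_apply, aeval_delay_sum_C_mul_X_pow_apply]
  simp [dotProduct, Fin.sum_univ_add, hφ, mul_comm]

lemma aeval_delay_transferPoly_apply (hq : 1 ≤ q) {U : ℤ → Fin (p + q) → ℝ}
    (hU : ∀ (i : ℤ) (j : Fin (p + q)), U i j = u (i - (j : ℕ))) (x : Fin (p + q) → ℝ) (i : ℤ) :
    aeval delay (transferPoly a b x) u i = U i ⬝ᵥ transferCoeffs a b x := by
  rw [aeval_delay_apply (natDegree_transferPoly_lt a b hq x), ← Fin.sum_univ_eq_sum_range]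
  simp [dotProduct, transferCoeffs, hU, mul_comm]

lemma mul_dotProduct_transferCoeffs_le (hq : 1 ≤ q)
    (hy : ∀ k : ℤ, y k = ∑ i : Fin p, a i * y (k - ((i : ℕ) + 1))
        + ∑ j : Fin q, b j * u (k - (j : ℕ)))
    {U : ℤ → Fin (p + q) → ℝ} (hU : ∀ (i : ℤ) (j : Fin (p + q)), U i j = u (i - (j : ℕ)))
    {φ : ℤ → Fin (p + q) → ℝ}
    (hφ : ∀ (i : ℤ) (j : Fin (p + q)),
      φ i j = if (j : ℕ) < p then y (i - ((j : ℕ) + 1)) else u (i - ((j : ℕ) - p)))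
    {m : ℕ} {δ₁ : ℝ} {k : ℤ}
    (hPE : (((1 : ℝ) / m) • ∑ l ∈ Finset.range m, vecMulVec (U (k + p + l)) (U (k + p + l))
        - δ₁ • (1 : Matrix (Fin (p + q)) (Fin (p + q)) ℝ)).PosSemidef)
    (x : Fin (p + q) → ℝ) :
    δ₁ * (transferCoeffs a b x ⬝ᵥ transferCoeffs a b x) ≤
      1 / m * (((p + 1) * ∑ r ∈ Finset.range (p + 1), (arPoly a).coeff r ^ 2) *
        ∑ l ∈ Finset.range (p + m), (φ (k + l) ⬝ᵥ x) ^ 2) := by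
  set e : ℤ → ℝ := fun i => φ i ⬝ᵥ x
  have hfilter : ∀ i, aeval delay (arPoly a) e i = U i ⬝ᵥ transferCoeffs a b x := fun i => by
    rw [show e = _ from funext (dotProduct_regressor hφ x),
      aeval_delay_add_of_aeval_delay_eq (aeval_delay_arPoly_eq hy), ← transferPoly_apply,
      aeval_delay_transferPoly_apply hq hU]
  have hPEx := (posSemidef_sub_smul_one_iff ((isHermitian_sum_vecMulVec_self _ _).smul
    (.all _)) δ₁).mp hPE (transferCoeffs a b x)
  rw [smul_mulVec, dotProduct_smul, dotProduct_sum_vecMulVec_self_mulVec, smul_eq_mul] at hPEx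
  calc δ₁ * (transferCoeffs a b x ⬝ᵥ transferCoeffs a b x)
      ≤ 1 / m * ∑ l ∈ Finset.range m, (aeval delay (arPoly a) e (k + p + l)) ^ 2 := by
        simpa only [hfilter] using hPEx
    _ ≤ _ := by gcongr; exact sum_sq_aeval_delay_le _ (natDegree_arPoly_le a) e k m

end ARMA

/-- persistent excitation of the input transfers to the regressor of the
ARMA model. If `(1/m) ∑_{i=k}^{k+m−1} U_i U_iᵀ ≥ δ₁ I` for all `k ≥ 1`, then there is a
constant `c₀ > 0` with `λ_min(∑_{i=k}^{k+p+m−1} φ_i φ_iᵀ) ≥ c₀ δ₁` for all `k ≥ 1`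
(expressed as positive semidefiniteness of the difference with `c₀δ₁ I`); consequently,
with `N = p + m` and `δ = c₀δ₁/N`, `(1/N) ∑_{i=k}^{k+N−1} φ_i φ_iᵀ ≥ δ I` for all `k ≥ 1`. -/
theorem stmt6 (p q m : ℕ) (hp : 1 ≤ p) (hq : 1 ≤ q) (hm : 1 ≤ m)
    (a : Fin p → ℝ) (b : Fin q → ℝ)
    (hap : a ⟨p - 1, by omega⟩ ≠ 0)
    (hcoprime : ¬ ∃ z : ℂ, (1 - ∑ i : Fin p, (a i : ℂ) * z ^ ((i : ℕ) + 1)) = 0 ∧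
        (∑ j : Fin q, (b j : ℂ) * z ^ (j : ℕ)) = 0)
    (u y : ℤ → ℝ)
    (hy : ∀ k : ℤ, y k = ∑ i : Fin p, a i * y (k - ((i : ℕ) + 1))
        + ∑ j : Fin q, b j * u (k - (j : ℕ)))
    (U : ℤ → Fin (p + q) → ℝ) (hU : ∀ (i : ℤ) (j : Fin (p + q)), U i j = u (i - (j : ℕ)))
    (φ : ℤ → Fin (p + q) → ℝ)
    (hφ : ∀ (i : ℤ) (j : Fin (p + q)),
      φ i j = if (j : ℕ) < p then y (i - ((j : ℕ) + 1)) else u (i - ((j : ℕ) - p)))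
    (δ₁ : ℝ) (hδ₁ : 0 < δ₁)
    (hPE : ∀ k : ℤ, 1 ≤ k →
      (((1 : ℝ) / m) • ∑ l ∈ Finset.range m, Matrix.vecMulVec (U (k + l)) (U (k + l))
        - δ₁ • (1 : Matrix (Fin (p + q)) (Fin (p + q)) ℝ)).PosSemidef) :
    ∃ c₀ : ℝ, 0 < c₀ ∧
      (∀ k : ℤ, 1 ≤ k →
        (∑ l ∈ Finset.range (p + m), Matrix.vecMulVec (φ (k + l)) (φ (k + l))
          - (c₀ * δ₁) • (1 : Matrix (Fin (p + q)) (Fin (p + q)) ℝ)).PosSemidef)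
      ∧ (∀ k : ℤ, 1 ≤ k →
        (((1 : ℝ) / (p + m : ℕ)) •
            ∑ l ∈ Finset.range (p + m), Matrix.vecMulVec (φ (k + l)) (φ (k + l))
          - (c₀ * δ₁ / (p + m : ℕ)) • (1 : Matrix (Fin (p + q)) (Fin (p + q)) ℝ)).PosSemidef) := by
  obtain ⟨K, hK, hxK⟩ := exists_dotProduct_self_le_of_injective _
    (transferCoeffs_injective a b hq (isCoprime_arPoly_maPoly a b hcoprime)
      (natDegree_arPoly a hp hap))
  set D := (p + 1) * ∑ r ∈ Finset.range (p + 1), (arPoly a).coeff r ^ 2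
  have hD : 0 < D := mul_pos (by positivity) (sum_sq_coeff_arPoly_pos a)
  have hm0 : (0 : ℝ) < m := by exact_mod_cast hm
  set c₀ := m / (D * K)
  have hlower : ∀ k : ℤ, 1 ≤ k → ∀ x,
      c₀ * δ₁ * (x ⬝ᵥ x) ≤ ∑ l ∈ Finset.range (p + m), (φ (k + l) ⬝ᵥ x) ^ 2 := by
    intro k hk x
    set c := transferCoeffs a b x
    calc c₀ * δ₁ * (x ⬝ᵥ x) ≤ c₀ * δ₁ * (K * (c ⬝ᵥ c)) := by gcongr; exact hxK x
      _ = m / D * (δ₁ * (c ⬝ᵥ c)) := by simp only [c₀]; field_simp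
      _ ≤ m / D * (1 / m * (D * ∑ l ∈ Finset.range (p + m), (φ (k + l) ⬝ᵥ x) ^ 2)) :=
          mul_le_mul_of_nonneg_left
            (mul_dotProduct_transferCoeffs_le hq hy hU hφ (hPE (k + p) (by omega)) x)
            (by positivity)
      _ = _ := by field_simp
  have hfirst : ∀ k : ℤ, 1 ≤ k →
      (∑ l ∈ Finset.range (p + m), vecMulVec (φ (k + l)) (φ (k + l))
        - (c₀ * δ₁) • (1 : Matrix (Fin (p + q)) (Fin (p + q)) ℝ)).PosSemidef := fun k hk =>
    (posSemidef_sub_smul_one_iff (isHermitian_sum_vecMulVec_self _ _) _).mpr fun x => by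
      simpa [dotProduct_sum_vecMulVec_self_mulVec] using hlower k hk x
  exact ⟨c₀, by positivity, hfirst,
    fun k hk => (hfirst k hk).one_div_smul_sub_div_smul_one (Nat.cast_nonneg _)⟩
end

section
/- Let η₁, η₂ > 0, 0 < h₁ < 1, and let (r_k)_{k≥0} be a sequence of nonnegative real numbers with r_0 > 0 satisfying r_k = (1 − η₁/k) r_{k−1} + (η₂/k) ∑_{i=2}^{k} h₁^{i−1} r_{k−i} + ε_k for all k ≥ 1, where the perturbations satisfy |ε_k| ≤ C/k² for some constant C > 0. Set η = η₁ − η₂ h₁/(1 − h₁). If 0 < η < 1, then r_k = O(1/k^η), i.e., there exists a constant C' such that r_k ≤ C'/k^η for all k ≥ 1. -/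
/-!
The exponent `η` is the one for which the first-order terms cancel: since
`η₂ ∑ h₁^(i-1) → η₂ h₁/(1-h₁) = η₁ - η`, the recursion maps `j ↦ j^(-η)` to
`k^(-η) (1 + O(1/k²))`. The perturbation `C/k²` is larger than `k^(-η-2)`, so we prove by
strong induction the sharper bound `r k ≤ M k^(-η) - D/k` for `k ≥ N₀`: the correction `-D/k`
gains `(1-η) D/k²` per step up to constants, which pays for the perturbation once `D ≫ M + C`.
In the convolution, the terms with `k - i ≥ N₀` are handled by the induction hypothesis and
Bernoulli's inequality `(k-i)^(-η) ≤ k^(-η)(1 + η i(i+1)/k)`; the others carry total weight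
`O(h₁^(k-N₀))` and are negligible for `k ≥ N₁`. The constants are fixed in the order
`D = αM + β`, `N₀`, `N₁`, `M`, the last one so large that the bound holds trivially for
`N₀ ≤ k < N₁`.
-/

open Finset Filter Topology

lemma rpow_neg_le_rpow_neg_mul_one_add {x y p : ℝ} (hy : 0 < y) (hyx : y ≤ x)
    (hp0 : 0 ≤ p) (hp1 : p ≤ 1) :
    y ^ (-p) ≤ x ^ (-p) * (1 + p * ((x - y) / y)) := by
  have hx : 0 < x := hy.trans_le hyx
  have hratio : x / y = 1 + (x - y) / y := by field_simp; ring
  calc y ^ (-p) = x ^ (-p) * (x / y) ^ p := by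
        rw [Real.div_rpow hx.le hy.le, Real.rpow_neg hx.le, Real.rpow_neg hy.le]
        field_simp
    _ ≤ x ^ (-p) * (1 + p * ((x - y) / y)) := by
        rw [hratio]
        gcongr
        exact rpow_one_add_le_one_add_mul_self (by linarith [div_nonneg (sub_nonneg.2 hyx) hy.le])
          hp0 hp1

lemma natCast_sub_rpow_neg_le {p : ℝ} (hp0 : 0 ≤ p) (hp1 : p ≤ 1) {i k : ℕ} (hik : i < k) :
    ((k - i : ℕ) : ℝ) ^ (-p) ≤ (k : ℝ) ^ (-p) * (1 + p * (i * (i + 1)) / k) := by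
  have hki : (0 : ℝ) < (k - i : ℕ) := by exact_mod_cast Nat.sub_pos_of_lt hik
  have hk : (0 : ℝ) < k := by exact_mod_cast (Nat.zero_le i).trans_lt hik
  have hcast : ((k - i : ℕ) : ℝ) = k - i := Nat.cast_sub hik.le
  have hle : ((k - i : ℕ) : ℝ) ≤ k := by exact_mod_cast Nat.sub_le k i
  calc ((k - i : ℕ) : ℝ) ^ (-p) ≤ (k : ℝ) ^ (-p) * (1 + p * ((k - (k - i : ℕ)) / (k - i : ℕ))) :=
        rpow_neg_le_rpow_neg_mul_one_add hki hle hp0 hp1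
    _ ≤ (k : ℝ) ^ (-p) * (1 + p * (i * (i + 1)) / k) := by
        rw [mul_div_assoc]
        gcongr (k : ℝ) ^ (-p) * (1 + p * ?_)
        rw [hcast, sub_sub_cancel, div_le_div_iff₀ (by rwa [← hcast]) hk]
        have : (i : ℝ) + 1 ≤ k := by exact_mod_cast hik
        have hi : (0 : ℝ) ≤ i := Nat.cast_nonneg i
        nlinarith [mul_nonneg (mul_nonneg hi hi) (sub_nonneg.2 this)]

lemma one_sub_mul_sum_Ioc_pow_pred (h : ℝ) {n : ℕ} (hn : 1 ≤ n) :
    (1 - h) * ∑ i ∈ Ioc 1 n, h ^ (i - 1) = h - h ^ n := by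
  induction n, hn using Nat.le_induction with
  | base => simp
  | succ n hn ih =>
    rw [sum_Ioc_succ_top hn, mul_add, ih, Nat.add_sub_cancel]
    ring

lemma summable_mul_succ_mul_pow_pred {h : ℝ} (h0 : 0 ≤ h) (h1 : h < 1) :
    Summable fun i : ℕ => (i : ℝ) * (i + 1) * h ^ (i - 1) := by
  have hn : ‖h‖ < 1 := by rwa [Real.norm_of_nonneg h0]
  rw [← summable_nat_add_iff 1]
  have := ((summable_pow_mul_geometric_of_norm_lt_one 2 hn).add
    ((summable_pow_mul_geometric_of_norm_lt_one 1 hn).mul_left 3)).add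
    ((summable_pow_mul_geometric_of_norm_lt_one 0 hn).mul_left 2)
  refine this.congr fun i => ?_
  push_cast
  ring

lemma sum_Ioc_far_le {h R : ℝ} {u : ℕ → ℝ} {k N : ℕ} (h0 : 0 ≤ h) (h1 : h ≤ 1) (hR : 0 ≤ R)
    (hN : N ≤ k) (hu : ∀ j < N, u j ≤ R) :
    ∑ i ∈ Ioc (k - N) k, h ^ (i - 1) * u (k - i) ≤ N * (h ^ (k - N) * R) := by
  have hcard : #(Ioc (k - N) k) = N := by simp; omega
  calc ∑ i ∈ Ioc (k - N) k, h ^ (i - 1) * u (k - i)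
      ≤ ∑ i ∈ Ioc (k - N) k, h ^ (k - N) * R := by
        refine sum_le_sum fun i hi => ?_
        rw [mem_Ioc] at hi
        exact (mul_le_mul_of_nonneg_left (hu _ (by omega)) (pow_nonneg h0 _)).trans
          (mul_le_mul_of_nonneg_right (pow_le_pow_of_le_one h0 h1 (by omega)) hR)
    _ = N * (h ^ (k - N) * R) := by rw [sum_const, hcard, nsmul_eq_mul]

lemma sum_Ioc_near_le {h η M D : ℝ} {u : ℕ → ℝ} {k n : ℕ} (h0 : 0 ≤ h) (hη0 : 0 ≤ η)
    (hη1 : η ≤ 1) (hM : 0 ≤ M) (hD : 0 ≤ D) (hn : n < k)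
    (hu : ∀ i ∈ Ioc 1 n, u (k - i) ≤ M * ((k - i : ℕ) : ℝ) ^ (-η) - D / (k - i : ℕ)) :
    ∑ i ∈ Ioc 1 n, h ^ (i - 1) * u (k - i) ≤
      M * (k : ℝ) ^ (-η) * (∑ i ∈ Ioc 1 n, h ^ (i - 1) +
        η / k * ∑ i ∈ Ioc 1 n, (i : ℝ) * (i + 1) * h ^ (i - 1)) -
      D / k * ∑ i ∈ Ioc 1 n, h ^ (i - 1) := by
  have hterm : ∀ i ∈ Ioc 1 n,
      u (k - i) ≤ M * ((k : ℝ) ^ (-η) * (1 + η * (i * (i + 1)) / k)) - D / k := by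
    intro i hi
    have hik : i < k := (mem_Ioc.1 hi).2.trans_lt hn
    have hki : (0 : ℝ) < (k - i : ℕ) := by exact_mod_cast Nat.sub_pos_of_lt hik
    have hD' : D / k ≤ D / (k - i : ℕ) := div_le_div_of_nonneg_left hD hki (by norm_cast; omega)
    have hpow := natCast_sub_rpow_neg_le hη0 hη1 hik
    linarith [hu i hi, mul_le_mul_of_nonneg_left hpow hM]
  calc ∑ i ∈ Ioc 1 n, h ^ (i - 1) * u (k - i)
      ≤ ∑ i ∈ Ioc 1 n, h ^ (i - 1) * (M * ((k : ℝ) ^ (-η) * (1 + η * (i * (i + 1)) / k)) - D / k) :=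
        sum_le_sum fun i hi => mul_le_mul_of_nonneg_left (hterm i hi) (pow_nonneg h0 _)
    _ = _ := by
        simp only [mul_add, mul_sum, ← sum_sub_distrib, ← sum_add_distrib]
        exact sum_congr rfl fun i _ => by ring

lemma sum_Icc_two_pow_pred_mul_le {h η M D R c : ℝ} {u : ℕ → ℝ} {N k : ℕ} (h0 : 0 ≤ h)
    (h1 : h < 1) (hη0 : 0 ≤ η) (hη1 : η ≤ 1) (hM : 0 ≤ M) (hD : 0 ≤ D) (hR : 0 ≤ R)
    (hc : ∀ n : ℕ, ∑ i ∈ Ioc 1 n, (i : ℝ) * (i + 1) * h ^ (i - 1) ≤ c)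
    (hN : 1 ≤ N) (hNk : N < k) (hfar : ∀ j < N, u j ≤ R)
    (hnear : ∀ j, N ≤ j → j < k → u j ≤ M * (j : ℝ) ^ (-η) - D / j) :
    ∑ i ∈ Icc 2 k, h ^ (i - 1) * u (k - i) ≤
      M * (k : ℝ) ^ (-η) * (h / (1 - h) + η * c / k) -
        D / k * (h / (1 - h) - h ^ (k - N) / (1 - h)) + N * (h ^ (k - N) * R) := by
  have h1' : 0 < 1 - h := by linarith
  have hsplit : ∑ i ∈ Icc 2 k, h ^ (i - 1) * u (k - i) =
      ∑ i ∈ Ioc 1 (k - N), h ^ (i - 1) * u (k - i) +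
        ∑ i ∈ Ioc (k - N) k, h ^ (i - 1) * u (k - i) := by
    rw [sum_Ioc_consecutive _ (by omega : 1 ≤ k - N) (by omega : k - N ≤ k),
      ← Icc_add_one_left_eq_Ioc]
    rfl
  have hW : ∑ i ∈ Ioc 1 (k - N), h ^ (i - 1) = h / (1 - h) - h ^ (k - N) / (1 - h) := by
    rw [← sub_div, eq_div_iff h1'.ne', mul_comm, one_sub_mul_sum_Ioc_pow_pred h (by omega)]
  have hnear' := sum_Ioc_near_le h0 hη0 hη1 hM hD (u := u) (n := k - N) (by omega)
    fun i hi => hnear (k - i) (by have := mem_Ioc.1 hi; omega) (by have := mem_Ioc.1 hi; omega)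
  rw [hW] at hnear'
  have hs : 0 ≤ h ^ (k - N) / (1 - h) := by positivity
  have hQ : η / k * ∑ i ∈ Ioc 1 (k - N), (i : ℝ) * (i + 1) * h ^ (i - 1) ≤ η * c / k := by
    rw [div_mul_eq_mul_div]
    gcongr
    exact hc _
  rw [hsplit]
  refine add_le_add (hnear'.trans (sub_le_sub_right ?_ _)) (sum_Ioc_far_le h0 h1.le hR hNk.le hfar)
  gcongr
  linarith

lemma one_sub_div_mul_one_add_div_add_div_le {a η x : ℝ} (hx : 2 ≤ x) (hη : 0 ≤ η) (ha : 0 ≤ a) :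
    (1 - a / x) * (1 + η / (x - 1)) + (a - η) / x ≤ 1 + 2 * η / x ^ 2 := by
  have hx0 : 0 < x := by linarith
  have hx1 : 0 < x - 1 := by linarith
  have key : (1 - a / x) * (1 + η / (x - 1)) + (a - η) / x = 1 + η * (1 - a) / (x * (x - 1)) := by
    field_simp
    ring
  rw [key, add_le_add_iff_left, div_le_div_iff₀ (by positivity) (by positivity)]
  nlinarith [mul_nonneg (mul_nonneg hη ha) (sq_nonneg x),
    mul_nonneg hη (mul_nonneg hx0.le (by linarith : 0 ≤ x - 2))]

lemma div_add_div_le_one_sub_div_div_add_div {a η x : ℝ} (hx : 2 ≤ x)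
    (ha : 2 * (a - 1) ≤ (x - 1) * (1 - η)) :
    1 / x + (1 - η) / (2 * x ^ 2) ≤ (1 - a / x) / (x - 1) + (a - η) / x ^ 2 := by
  have hx0 : 0 < x := by linarith
  have hx1 : 0 < x - 1 := by linarith
  have key : (1 - a / x) / (x - 1) + (a - η) / x ^ 2 - (1 / x + (1 - η) / (2 * x ^ 2)) =
      ((1 - η) * (x - 1) + 2 * (1 - a)) / (2 * x ^ 2 * (x - 1)) := by
    field_simp
    ring
  have : 0 ≤ ((1 - η) * (x - 1) + 2 * (1 - a)) / (2 * x ^ 2 * (x - 1)) :=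
    div_nonneg (by linarith) (by positivity)
  linarith

theorem le_rpow_neg_sub_div_of_recursion {η₁ η₂ h η C M D R c : ℝ} {r ε : ℕ → ℝ} {N k : ℕ}
    (hη₂ : 0 ≤ η₂) (h0 : 0 ≤ h) (h1 : h < 1) (hη0 : 0 < η) (hη1 : η < 1)
    (hθ : η₂ * (h / (1 - h)) = η₁ - η) (hM : 0 ≤ M) (hD : 0 ≤ D) (hR : 0 ≤ R)
    (hc : ∀ n : ℕ, ∑ i ∈ Ioc 1 n, (i : ℝ) * (i + 1) * h ^ (i - 1) ≤ c)
    (hbudget : M * η * (2 + η₂ * c) + C + 1 ≤ (1 - η) / 4 * D)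
    (hN : 1 ≤ N) (hNk : N < k) (hk₁ : η₁ ≤ k) (hk₂ : 2 * (η₁ - 1) ≤ (k - 1) * (1 - η))
    (hsmall : η₂ / (1 - h) * h ^ (k - N) ≤ (1 - η) / 4)
    (hsmall' : η₂ * N * R * (k * h ^ (k - N)) ≤ 1)
    (hrec : r k = (1 - η₁ / k) * r (k - 1) +
      η₂ / k * ∑ i ∈ Icc 2 k, h ^ (i - 1) * r (k - i) + ε k)
    (hε : ε k ≤ C / k ^ 2) (hfar : ∀ j < N, r j ≤ R)
    (ih : ∀ j, N ≤ j → j < k → r j ≤ M * (j : ℝ) ^ (-η) - D / j) :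
    r k ≤ M * (k : ℝ) ^ (-η) - D / k := by
  have hη₁ : 0 ≤ η₁ := by linarith [mul_nonneg hη₂ (div_nonneg h0 (sub_pos.2 h1).le)]
  have hc0 : 0 ≤ c := by simpa using hc 0
  have hsum := sum_Icc_two_pow_pred_mul_le h0 h1 hη0.le hη1.le hM hD hR hc hN hNk hfar ih
  set x : ℝ := (k : ℝ) with hx_def
  have hx : 2 ≤ x := by rw [hx_def]; exact_mod_cast (by omega : 2 ≤ k)
  have hx0 : 0 < x := by linarith
  set v := x ^ (-η)
  have hv0 : 0 ≤ v := Real.rpow_nonneg hx0.le _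
  have hv1 : v ≤ 1 := Real.rpow_le_one_of_one_le_of_nonpos (by linarith) (by linarith)
  have hprev : (1 - η₁ / x) * r (k - 1) ≤
      (1 - η₁ / x) * (M * v * (1 + η / (x - 1)) - D / (x - 1)) := by
    have hcast : ((k - 1 : ℕ) : ℝ) = x - 1 := by rw [Nat.cast_sub (by omega)]; simp [hx_def]
    have hih := ih (k - 1) (by omega) (by omega)
    have hb := rpow_neg_le_rpow_neg_mul_one_add (x := x) (y := x - 1) (by linarith) (by linarith)
      hη0.le hη1.le
    rw [sub_sub_cancel, mul_one_div] at hb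
    rw [hcast] at hih
    refine mul_le_mul_of_nonneg_left ?_ (sub_nonneg.2 ((div_le_one hx0).2 hk₁))
    linarith [mul_le_mul_of_nonneg_left hb hM]
  have hfar' : η₂ / x * (N * (h ^ (k - N) * R)) ≤ 1 / x ^ 2 := by
    rw [div_mul_eq_mul_div, div_le_div_iff₀ hx0 (by positivity)]
    linear_combination x * hsmall'
  -- `hθ` cancels the terms of order `1/x`; `hbudget` absorbs those of order `1/x²`.
  linear_combination hrec + hprev + η₂ / x * hsum + hfar' +
    M * v * one_sub_div_mul_one_add_div_add_div_le hx hη0.le hη₁ +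
    D * div_add_div_le_one_sub_div_div_add_div hx hk₂ + M * η * (2 + η₂ * c) / x ^ 2 * hv1 +
    D / x ^ 2 * hsmall + hbudget / x ^ 2 + hε + (M * v / x - D / x ^ 2) * hθ

lemma le_mul_rpow_neg_sub_div {p α β R x X : ℝ} (hx : 1 ≤ x) (hxX : x ≤ X) (hp : 0 ≤ p)
    (hα : 2 * α ≤ x ^ (1 - p)) (hβ : 0 ≤ β) (hR : 0 ≤ R) :
    R ≤ 2 * (R + β) * X ^ p * x ^ (-p) - (α * (2 * (R + β) * X ^ p) + β) / x := by
  have hx0 : 0 < x := by linarith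
  have hXx : 1 ≤ X ^ p * x ^ (-p) := by
    rw [Real.rpow_neg hx0.le, ← div_eq_mul_inv, one_le_div (by positivity)]
    exact Real.rpow_le_rpow hx0.le hxX hp
  have hαx : α / x ≤ x ^ (-p) / 2 := by
    rw [Real.rpow_sub hx0, Real.rpow_one] at hα
    rw [Real.rpow_neg hx0.le, div_le_iff₀ hx0]
    linarith [show (x ^ p)⁻¹ / 2 * x = x / x ^ p / 2 by ring]
  have hM : 0 ≤ 2 * (R + β) * X ^ p :=
    mul_nonneg (by positivity) (Real.rpow_nonneg (by linarith) p)
  calc R = (R + β) * 1 - β := by ring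
    _ ≤ (R + β) * (X ^ p * x ^ (-p)) - β := by gcongr
    _ ≤ 2 * (R + β) * X ^ p * x ^ (-p) - 2 * (R + β) * X ^ p * (α / x) - β / x := by
        linarith [mul_le_mul_of_nonneg_left hαx hM, div_le_self hβ hx]
    _ = 2 * (R + β) * X ^ p * x ^ (-p) - (α * (2 * (R + β) * X ^ p) + β) / x := by ring

lemma exists_nonneg_forall_lt_le (u : ℕ → ℝ) (N : ℕ) : ∃ R, 0 ≤ R ∧ ∀ j < N, u j ≤ R :=
  ⟨∑ j ∈ range N, |u j|, by positivity, fun j hj => (le_abs_self _).trans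
    (single_le_sum (fun i _ => abs_nonneg (u i)) (mem_range.2 hj))⟩

theorem exists_forall_ge_le_mul_rpow_neg_of_recursion {η₁ η₂ h η C c R₀ : ℝ} {r ε : ℕ → ℝ}
    {N₀ N₁ : ℕ} (hη₂ : 0 ≤ η₂) (h0 : 0 ≤ h) (h1 : h < 1) (hC : 0 ≤ C) (hη0 : 0 < η) (hη1 : η < 1)
    (hθ : η₂ * (h / (1 - h)) = η₁ - η)
    (hc : ∀ n : ℕ, ∑ i ∈ Ioc 1 n, (i : ℝ) * (i + 1) * h ^ (i - 1) ≤ c)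
    (hrec : ∀ k : ℕ, 1 ≤ k → r k = (1 - η₁ / k) * r (k - 1) +
      η₂ / k * ∑ i ∈ Icc 2 k, h ^ (i - 1) * r (k - i) + ε k)
    (hε : ∀ k : ℕ, 1 ≤ k → ε k ≤ C / (k : ℝ) ^ 2)
    (hN₀ : ∀ k, N₀ ≤ k → 1 ≤ k ∧ η₁ ≤ (k : ℝ) ∧ 2 * (η₁ - 1) ≤ ((k : ℝ) - 1) * (1 - η) ∧
      2 * (4 * η * (2 + η₂ * c) / (1 - η)) ≤ (k : ℝ) ^ (1 - η))
    (hR₀ : 0 ≤ R₀) (hrR₀ : ∀ j < N₀, r j ≤ R₀)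
    (hN₁ : ∀ k, N₁ ≤ k → N₀ < k ∧ η₂ / (1 - h) * h ^ (k - N₀) ≤ (1 - η) / 4 ∧
      η₂ * N₀ * R₀ * (k * h ^ (k - N₀)) ≤ 1) :
    ∃ M, 0 ≤ M ∧ ∀ k, N₀ ≤ k → r k ≤ M * (k : ℝ) ^ (-η) := by
  obtain ⟨R₁, hR₁, hrR₁⟩ := exists_nonneg_forall_lt_le r N₁
  have hc0 : 0 ≤ c := by simpa using hc 0
  set α := 4 * η * (2 + η₂ * c) / (1 - η)
  set β := 4 * (C + 1) / (1 - η)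
  set M := 2 * (R₁ + β) * (N₁ : ℝ) ^ η
  have hα : 0 ≤ α := div_nonneg (by positivity) (by linarith)
  have hβ : 0 ≤ β := div_nonneg (by linarith) (by linarith)
  have hM : 0 ≤ M := by positivity
  have hD : 0 ≤ α * M + β := by positivity
  have hbudget : M * η * (2 + η₂ * c) + C + 1 ≤ (1 - η) / 4 * (α * M + β) := by
    apply le_of_eq
    have : 1 - η ≠ 0 := (sub_pos.2 hη1).ne'
    simp only [α, β]
    field_simp
    ring
  have hmain : ∀ k, N₀ ≤ k → r k ≤ M * (k : ℝ) ^ (-η) - (α * M + β) / k := by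
    intro k
    induction k using Nat.strong_induction_on with
    | _ k ih =>
    intro hk
    obtain ⟨hk1, hk₁, hk₂, hkα⟩ := hN₀ k hk
    rcases lt_or_ge k N₁ with hkN₁ | hkN₁
    · exact (hrR₁ k hkN₁).trans (le_mul_rpow_neg_sub_div (by exact_mod_cast hk1)
        (by exact_mod_cast hkN₁.le) hη0.le hkα hβ hR₁)
    · obtain ⟨hNk, hsmall, hsmall'⟩ := hN₁ k hkN₁
      exact le_rpow_neg_sub_div_of_recursion hη₂ h0 h1 hη0 hη1 hθ hM hD hR₀ hc hbudget
        (hN₀ N₀ le_rfl).1 hNk hk₁ hk₂ hsmall hsmall' (hrec k hk1) (hε k hk1) hrR₀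
        fun j hj hjk => ih j hjk hj
  exact ⟨M, hM, fun k hk => (hmain k hk).trans (sub_le_self _ (by positivity))⟩

lemma tendsto_natCast_mul_pow_sub {h : ℝ} (h0 : 0 ≤ h) (h1 : h < 1) (N : ℕ) :
    Tendsto (fun k : ℕ => (k : ℝ) * h ^ (k - N)) atTop (𝓝 0) := by
  have hlim : Tendsto (fun n : ℕ => (n : ℝ) * h ^ n + N * h ^ n) atTop (𝓝 0) := by
    simpa using (tendsto_self_mul_const_pow_of_lt_one h0 h1).add
      ((tendsto_pow_atTop_nhds_zero_of_lt_one h0 h1).const_mul (N : ℝ))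
  refine (hlim.comp (tendsto_sub_atTop_nat N)).congr' ?_
  filter_upwards [eventually_ge_atTop N] with k hk
  simp only [Function.comp_apply, Nat.cast_sub hk]
  ring

lemma eventually_natCast_large {q : ℝ} (hq : 0 < q) (a b A : ℝ) :
    ∀ᶠ k : ℕ in atTop, 1 ≤ k ∧ a ≤ (k : ℝ) ∧ b ≤ ((k : ℝ) - 1) * q ∧ A ≤ (k : ℝ) ^ q := by
  have hcast := tendsto_natCast_atTop_atTop (R := ℝ)
  filter_upwards [eventually_ge_atTop 1, hcast.eventually_ge_atTop a,
    hcast.eventually_ge_atTop (1 + b / q),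
    ((tendsto_rpow_atTop hq).comp hcast).eventually_ge_atTop A] with k hk1 hka hkb hkA
  refine ⟨hk1, hka, ?_, hkA⟩
  rwa [← le_sub_iff_add_le', div_le_iff₀ hq] at hkb

lemma eventually_tail_small {h δ : ℝ} (h0 : 0 ≤ h) (h1 : h < 1) (hδ : 0 < δ) (N : ℕ) (a b : ℝ) :
    ∀ᶠ k : ℕ in atTop, N < k ∧ a * h ^ (k - N) ≤ δ ∧ b * (k * h ^ (k - N)) ≤ 1 := by
  have hpow := (tendsto_pow_atTop_nhds_zero_of_lt_one h0 h1).comp (tendsto_sub_atTop_nat N)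
  refine (eventually_gt_atTop N).and ((Tendsto.eventually_le_const ?_ (hpow.const_mul a)).and
    (Tendsto.eventually_le_const ?_ ((tendsto_natCast_mul_pow_sub h0 h1 N).const_mul b)))
  · rwa [mul_zero]
  · rw [mul_zero]
    exact one_pos

lemma exists_pos_forall_le_div_rpow {u : ℕ → ℝ} {p M : ℝ} {N : ℕ} (hp : 0 ≤ p) (hM : 0 ≤ M)
    (hu : ∀ k, N ≤ k → u k ≤ M * (k : ℝ) ^ (-p)) :
    ∃ C' : ℝ, 0 < C' ∧ ∀ k : ℕ, 1 ≤ k → u k ≤ C' / (k : ℝ) ^ p := by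
  obtain ⟨R, hR, huR⟩ := exists_nonneg_forall_lt_le u N
  have hRN : 0 ≤ R * (N : ℝ) ^ p := by positivity
  refine ⟨M + R * (N : ℝ) ^ p + 1, by linarith, fun k hk => ?_⟩
  have hk0 : (0 : ℝ) < k := by exact_mod_cast hk
  have hkp : 0 < (k : ℝ) ^ p := Real.rpow_pos_of_pos hk0 p
  rw [le_div_iff₀ hkp]
  rcases le_or_gt N k with hNk | hkN
  · have := hu k hNk
    rw [Real.rpow_neg hk0.le, ← div_eq_mul_inv, le_div_iff₀ hkp] at this
    nlinarith
  · have hpow : (k : ℝ) ^ p ≤ (N : ℝ) ^ p :=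
      Real.rpow_le_rpow hk0.le (by exact_mod_cast hkN.le) hp
    nlinarith [huR k hkN, mul_le_mul_of_nonneg_left hpow hR]

theorem stmt7_general (η₁ η₂ h₁ C : ℝ) (hη₂ : 0 < η₂)
    (hh₁0 : 0 < h₁) (hh₁1 : h₁ < 1) (hC : 0 < C)
    (r : ℕ → ℝ)
    (ε : ℕ → ℝ) (hε : ∀ k : ℕ, 1 ≤ k → |ε k| ≤ C / (k : ℝ) ^ 2)
    (hrec : ∀ k : ℕ, 1 ≤ k →
      r k = (1 - η₁ / (k : ℝ)) * r (k - 1)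
          + (η₂ / (k : ℝ)) * ∑ i ∈ Finset.Icc 2 k, h₁ ^ (i - 1) * r (k - i)
          + ε k)
    (η : ℝ) (hη : η = η₁ - η₂ * h₁ / (1 - h₁)) (hη0 : 0 < η) (hη1 : η < 1) :
    ∃ C' : ℝ, 0 < C' ∧ ∀ k : ℕ, 1 ≤ k → r k ≤ C' / (k : ℝ) ^ η := by
  have hθ : η₂ * (h₁ / (1 - h₁)) = η₁ - η := by rw [hη]; ring
  set c := ∑' i : ℕ, (i : ℝ) * (i + 1) * h₁ ^ (i - 1)
  have hc : ∀ n : ℕ, ∑ i ∈ Ioc 1 n, (i : ℝ) * (i + 1) * h₁ ^ (i - 1) ≤ c := fun n =>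
    (summable_mul_succ_mul_pow_pred hh₁0.le hh₁1).sum_le_tsum _ fun i _ => by positivity
  obtain ⟨N₀, hN₀⟩ := eventually_atTop.1 <| eventually_natCast_large (sub_pos.2 hη1) η₁
    (2 * (η₁ - 1)) (2 * (4 * η * (2 + η₂ * c) / (1 - η)))
  obtain ⟨R₀, hR₀, hrR₀⟩ := exists_nonneg_forall_lt_le r N₀
  obtain ⟨N₁, hN₁⟩ := eventually_atTop.1 <| eventually_tail_small hh₁0.le hh₁1
    (by linarith : 0 < (1 - η) / 4) N₀ (η₂ / (1 - h₁)) (η₂ * N₀ * R₀)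
  obtain ⟨M, hM, hle⟩ := exists_forall_ge_le_mul_rpow_neg_of_recursion hη₂.le hh₁0.le hh₁1 hC.le
    hη0 hη1 hθ hc hrec (fun k hk => (abs_le.1 (hε k hk)).2) hN₀ hR₀ hrR₀ hN₁
  exact exists_pos_forall_le_div_rpow hη0.le hM hle

/-- for the convolution-type recursion
`r_k = (1 − η₁/k) r_{k−1} + (η₂/k) ∑_{i=2}^k h₁^{i−1} r_{k−i} + ε_k` with
`|ε_k| ≤ C/k²`, if `η = η₁ − η₂h₁/(1−h₁)` satisfies `0 < η < 1`, then
`r_k = O(1/k^η)`, i.e. `r_k ≤ C'/k^η` for all `k ≥ 1` and some constant `C'`. -/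
theorem stmt7 (η₁ η₂ h₁ C : ℝ) (hη₁ : 0 < η₁) (hη₂ : 0 < η₂)
    (hh₁0 : 0 < h₁) (hh₁1 : h₁ < 1) (hC : 0 < C)
    (r : ℕ → ℝ) (hr0 : 0 < r 0) (hrnn : ∀ k, 0 ≤ r k)
    (ε : ℕ → ℝ) (hε : ∀ k : ℕ, 1 ≤ k → |ε k| ≤ C / (k : ℝ) ^ 2)
    (hrec : ∀ k : ℕ, 1 ≤ k →
      r k = (1 - η₁ / (k : ℝ)) * r (k - 1)
          + (η₂ / (k : ℝ)) * ∑ i ∈ Finset.Icc 2 k, h₁ ^ (i - 1) * r (k - i)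
          + ε k)
    (η : ℝ) (hη : η = η₁ - η₂ * h₁ / (1 - h₁)) (hη0 : 0 < η) (hη1 : η < 1) :
    ∃ C' : ℝ, 0 < C' ∧ ∀ k : ℕ, 1 ≤ k → r k ≤ C' / (k : ℝ) ^ η :=
  stmt7_general η₁ η₂ h₁ C hη₂ hh₁0 hh₁1 hC r ε hε hrec η hη hη0 hη1
end

section
/- Let η₁, η₂ > 0, 0 < h₁ < 1, and let (r_k)_{k≥0} be a sequence of nonnegative real numbers with r_0 > 0 satisfying r_k = (1 − η₁/k) r_{k−1} + (η₂/k) ∑_{i=2}^{k} h₁^{i−1} r_{k−i} + ε_k for all k ≥ 1, where |ε_k| ≤ C/k² for some constant C > 0. If η := η₁ − η₂ h₁/(1 − h₁) = 1, then r_k = O((ln k)/k). -/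
open Finset Filter Real

/-!
By strong induction, `r k ≤ A log k / k` for `k ≥ K`. In the recursion the terms
`r (k-1-j)` with `k-1-j ≥ K` are at most `A log(k-1) (1/(k-1) + 6j²/k²)`; the weights `h^j` sum
to `β = h/(1-h)` and the weights `j² h^j` to a finite `Γ`. Because `η₁ - η₂ β = 1` the main
terms collapse to `(1 - 1/k) A log(k-1)/(k-1) = A log(k-1)/k`, and `log(k-1) + 1/k ≤ log k`
leaves a margin `A/k²`. Once `K` and `A` are large this margin absorbs the `O(log k/k³)`
correction, the geometrically small contribution of `r 0, …, r (K-1)` and the error `C/k²`.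
-/

theorem nat_mul_pow_le_div_one_sub {h : ℝ} (h0 : 0 ≤ h) (h1 : h < 1) (m : ℕ) :
    m * h ^ m ≤ h / (1 - h) := by
  calc (m : ℝ) * h ^ m = ∑ _j ∈ Ico 1 (m + 1), h ^ m := by simp
    _ ≤ ∑ j ∈ Ico 1 (m + 1), h ^ j := by
        refine sum_le_sum fun j hj => pow_le_pow_of_le_one h0 h1.le ?_
        rw [mem_Ico] at hj
        omega
    _ ≤ h / (1 - h) := by simpa using geom_sum_Ico_le_of_lt_one (m := 1) (n := m + 1) h0 h1

theorem one_div_sub_sub_le {x j : ℝ} (hj : 1 ≤ j) (hjx : j + 2 ≤ x) :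
    1 / (x - 1 - j) ≤ 1 / (x - 1) + 6 * j ^ 2 / x ^ 2 := by
  have hx : x ≤ 3 * j * (x - 1 - j) := by nlinarith
  have hx' : x ≤ 2 * (x - 1) := by linarith
  have hsq : x ^ 2 ≤ 6 * j * ((x - 1 - j) * (x - 1)) := by nlinarith
  have hx0 : 0 < x := by linarith
  rw [div_add_div _ _ (by linarith) (by positivity), div_le_div_iff₀ (by linarith) (by nlinarith)]
  nlinarith

theorem log_sub_one_add_one_div_le_log {x : ℝ} (hx : 1 < x) :
    log (x - 1) + 1 / x ≤ log x := by
  have h := one_sub_inv_le_log_of_pos (x := x / (x - 1)) (by apply div_pos <;> linarith)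
  rw [log_div (by positivity) (by linarith), inv_div] at h
  have : 1 - (x - 1) / x = 1 / x := by field_simp; ring
  linarith

theorem exists_mul_log_le (c : ℝ) : ∃ a : ℝ, ∀ x ≥ a, c * log x ≤ x := by
  obtain ⟨a, ha⟩ := eventually_atTop.1
    (((isLittleO_log_id_atTop.const_mul_left c).bound one_pos).and (eventually_ge_atTop 0))
  refine ⟨a, fun x hx => ?_⟩
  obtain ⟨hle, hx0⟩ := ha x hx
  simp only [norm_eq_abs, id, one_mul, abs_of_nonneg hx0] at hle
  exact (le_abs_self _).trans hle

theorem le_mul_log_div_of_rec_bounds {x η₁ η₂ β Γ A L T C a s u : ℝ} (hx : 1 < x)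
    (hη₂ : 0 ≤ η₂) (hη : η₁ = 1 + η₂ * β) (hη₁x : η₁ ≤ x) (hA : 0 ≤ A)
    (hΓL : 12 * η₂ * Γ * L ≤ x) (hT : η₂ * T + C ≤ A / 2) (hL : L + 1 / x ≤ log x)
    (ha : a ≤ A * L / (x - 1)) (hs : s ≤ β * (A * L / (x - 1)) + Γ * (6 * A * L / x ^ 2) + T / x)
    (hu : u ≤ (1 - η₁ / x) * a + η₂ / x * s + C / x ^ 2) :
    u ≤ A * log x / x := by
  have hx0 : 0 < x := by linarith
  have hcoef : 0 ≤ 1 - η₁ / x := by rw [sub_nonneg, div_le_one hx0]; exact hη₁x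
  calc u ≤ (1 - η₁ / x) * (A * L / (x - 1))
        + η₂ / x * (β * (A * L / (x - 1)) + Γ * (6 * A * L / x ^ 2) + T / x) + C / x ^ 2 := by
        have := div_nonneg hη₂ hx0.le
        refine hu.trans ?_
        gcongr
    _ = A * L / x + (12 * η₂ * Γ * L) * A / (2 * x ^ 3) + (η₂ * T + C) / x ^ 2 := by
        have : x - 1 ≠ 0 := by linarith
        subst hη
        field_simp
        ring
    _ ≤ A * L / x + x * A / (2 * x ^ 3) + (A / 2) / x ^ 2 := by gcongr
    _ = A * (L + 1 / x) / x := by field_simp; ring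
    _ ≤ A * log x / x := by gcongr

theorem sum_Ico_pow_mul_le_of_le_mul_log_div {h A : ℝ} {r : ℕ → ℝ} {K k : ℕ} (h0 : 0 ≤ h)
    (h1 : h < 1) (hA : 0 ≤ A) (hK : 1 ≤ K) (hKk : K < k)
    (ih : ∀ m, K ≤ m → m < k → r m ≤ A * log m / m) :
    ∑ j ∈ Ico 1 (k - K), h ^ j * r (k - 1 - j)
      ≤ h / (1 - h) * (A * log (k - 1) / (k - 1))
        + (∑' j : ℕ, (j : ℝ) ^ 2 * h ^ j) * (6 * A * log (k - 1) / k ^ 2) := by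
  set L := log ((k : ℝ) - 1)
  have hk : (2 : ℝ) ≤ k := by exact_mod_cast (by omega : 2 ≤ k)
  have hAL : 0 ≤ A * L := mul_nonneg hA (log_nonneg (by linarith))
  have hterm : ∀ j ∈ Ico 1 (k - K), h ^ j * r (k - 1 - j)
      ≤ h ^ j * (A * L / (k - 1)) + (j : ℝ) ^ 2 * h ^ j * (6 * A * L / k ^ 2) := by
    intro j hj
    rw [mem_Ico] at hj
    have hm : ((k - 1 - j : ℕ) : ℝ) = k - 1 - j := by
      rw [Nat.cast_sub (by omega), Nat.cast_sub (by omega)]; simp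
    have hj1 : (1 : ℝ) ≤ j := by exact_mod_cast hj.1
    have hjk : (j : ℝ) + 2 ≤ k := by exact_mod_cast (by omega : j + 2 ≤ k)
    have hlog : log ((k : ℝ) - 1 - j) ≤ L := log_le_log (by linarith) (by linarith)
    have hr : r (k - 1 - j) ≤ A * L * (1 / (k - 1 - j)) := by
      calc r (k - 1 - j) ≤ A * log ((k : ℝ) - 1 - j) / (k - 1 - j) := by
            simpa only [hm] using ih (k - 1 - j) (by omega) (by omega)
        _ ≤ A * L * (1 / (k - 1 - j)) := by
            rw [mul_one_div]; gcongr; linarith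
    calc h ^ j * r (k - 1 - j)
        ≤ h ^ j * (A * L * (1 / (k - 1) + 6 * j ^ 2 / k ^ 2)) := by
          gcongr
          exact hr.trans (mul_le_mul_of_nonneg_left (one_div_sub_sub_le hj1 hjk) hAL)
      _ = h ^ j * (A * L / (k - 1)) + (j : ℝ) ^ 2 * h ^ j * (6 * A * L / k ^ 2) := by ring
  have hsummable : Summable fun j : ℕ => (j : ℝ) ^ 2 * h ^ j :=
    summable_pow_mul_geometric_of_norm_lt_one 2 (by rwa [norm_of_nonneg h0])
  calc ∑ j ∈ Ico 1 (k - K), h ^ j * r (k - 1 - j)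
      ≤ ∑ j ∈ Ico 1 (k - K),
          (h ^ j * (A * L / (k - 1)) + (j : ℝ) ^ 2 * h ^ j * (6 * A * L / k ^ 2)) :=
        sum_le_sum hterm
    _ = (∑ j ∈ Ico 1 (k - K), h ^ j) * (A * L / (k - 1))
        + (∑ j ∈ Ico 1 (k - K), (j : ℝ) ^ 2 * h ^ j) * (6 * A * L / k ^ 2) := by
        rw [sum_add_distrib, sum_mul, sum_mul]
    _ ≤ h / (1 - h) * (A * L / (k - 1))
        + (∑' j : ℕ, (j : ℝ) ^ 2 * h ^ j) * (6 * A * L / k ^ 2) := by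
        have := div_nonneg hAL (by linarith : (0 : ℝ) ≤ k - 1)
        gcongr
        · simpa using geom_sum_Ico_le_of_lt_one (m := 1) (n := k - K) h0 h1
        · exact div_nonneg (by rw [mul_assoc]; exact mul_nonneg (by norm_num) hAL) (by positivity)
        · exact hsummable.sum_le_tsum _ fun j _ => by positivity

theorem mul_sum_Ico_pow_mul_le {h R : ℝ} {r : ℕ → ℝ} {K k : ℕ} (h0 : 0 ≤ h) (h1 : h < 1)
    (hR0 : 0 ≤ R) (hR : ∀ m < K, r m ≤ R) (hKk : K ≤ k) :
    k * ∑ j ∈ Ico (k - K) k, h ^ j * r (k - 1 - j) ≤ R * (K + h / (1 - h)) / (1 - h) := by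
  have h1' : 0 < 1 - h := by linarith
  have hsum : ∑ j ∈ Ico (k - K) k, h ^ j * r (k - 1 - j) ≤ R * (h ^ (k - K) / (1 - h)) :=
    calc ∑ j ∈ Ico (k - K) k, h ^ j * r (k - 1 - j) ≤ ∑ j ∈ Ico (k - K) k, h ^ j * R := by
          refine sum_le_sum fun j hj => mul_le_mul_of_nonneg_left (hR _ ?_) (by positivity)
          rw [mem_Ico] at hj
          omega
      _ ≤ R * (h ^ (k - K) / (1 - h)) := by
          rw [← sum_mul, mul_comm]
          exact mul_le_mul_of_nonneg_left (geom_sum_Ico_le_of_lt_one h0 h1) hR0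
  have hpow : (k : ℝ) * h ^ (k - K) ≤ K + h / (1 - h) := by
    have hk : (k : ℝ) = K + (k - K : ℕ) := by rw [← Nat.cast_add]; congr 1; omega
    rw [hk, add_mul]
    gcongr
    · exact mul_le_of_le_one_right (Nat.cast_nonneg _) (pow_le_one₀ h0 h1.le)
    · exact nat_mul_pow_le_div_one_sub h0 h1 _
  calc (k : ℝ) * ∑ j ∈ Ico (k - K) k, h ^ j * r (k - 1 - j)
      ≤ k * (R * (h ^ (k - K) / (1 - h))) := by gcongr
    _ = R * (k * h ^ (k - K)) / (1 - h) := by ring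
    _ ≤ R * (K + h / (1 - h)) / (1 - h) := by gcongr

theorem le_mul_log_div_of_le_rec {η₁ η₂ h C A R : ℝ} {r : ℕ → ℝ} {K : ℕ}
    (hη₂ : 0 ≤ η₂) (h0 : 0 ≤ h) (h1 : h < 1) (hη : η₁ = 1 + η₂ * (h / (1 - h)))
    (hrec : ∀ k, 1 ≤ k → r k ≤ (1 - η₁ / k) * r (k - 1)
      + η₂ / k * ∑ j ∈ Ico 1 k, h ^ j * r (k - 1 - j) + C / k ^ 2)
    (hK : 1 ≤ K) (hKη : η₁ ≤ K)
    (hlog : ∀ x : ℝ, K ≤ x → 12 * η₂ * (∑' j : ℕ, (j : ℝ) ^ 2 * h ^ j) * log x ≤ x)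
    (hR0 : 0 ≤ R) (hR : ∀ m < K, r m ≤ R) (hA : 0 ≤ A)
    (hAR : η₂ * (R * (K + h / (1 - h)) / (1 - h)) + C ≤ A / 2)
    (hbase : r K ≤ A * log K / K) (k : ℕ) (hKk : K ≤ k) :
    r k ≤ A * log k / k := by
  induction k using Nat.strong_induction_on with
  | _ k ih =>
  rcases hKk.eq_or_lt with rfl | hKk
  · exact hbase
  have ih' (m : ℕ) (hm : K ≤ m) (hmk : m < k) : r m ≤ A * log m / m := ih m hmk hm
  have hK1 : (1 : ℝ) ≤ K := by exact_mod_cast hK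
  have hx : (K : ℝ) + 1 ≤ k := by exact_mod_cast hKk
  have hhead := sum_Ico_pow_mul_le_of_le_mul_log_div h0 h1 hA hK hKk ih'
  have htail := (le_div_iff₀' (by linarith)).2 (mul_sum_Ico_pow_mul_le h0 h1 hR0 hR hKk.le)
  refine le_mul_log_div_of_rec_bounds (by linarith) hη₂ hη (by linarith) hA
    ((hlog _ (by linarith)).trans (by linarith)) hAR
    (log_sub_one_add_one_div_le_log (by linarith)) ?_ ?_ (hrec k (by omega))
  · simpa [Nat.cast_sub (by omega : 1 ≤ k)] using ih' (k - 1) (by omega) (by omega)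
  · rw [← sum_Ico_consecutive _ (by omega : 1 ≤ k - K) (by omega : k - K ≤ k)]
    exact add_le_add hhead htail

theorem exists_le_mul_log_div_of_le_rec {η₁ η₂ h C : ℝ} {r : ℕ → ℝ} (hη₂ : 0 ≤ η₂) (h0 : 0 ≤ h)
    (h1 : h < 1) (hC : 0 ≤ C) (hη : η₁ - η₂ * h / (1 - h) = 1)
    (hrec : ∀ k, 1 ≤ k → r k ≤ (1 - η₁ / k) * r (k - 1)
      + η₂ / k * ∑ j ∈ Ico 1 k, h ^ j * r (k - 1 - j) + C / k ^ 2) :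
    ∃ A > 0, ∃ K : ℕ, ∀ k, K ≤ k → r k ≤ A * log k / k := by
  obtain ⟨a, ha⟩ := exists_mul_log_le (12 * η₂ * ∑' j : ℕ, (j : ℝ) ^ 2 * h ^ j)
  set K := ⌈max (max 2 η₁) a⌉₊
  have hK : max (max 2 η₁) a ≤ K := Nat.le_ceil _
  simp only [sup_le_iff] at hK
  obtain ⟨⟨hK2, hKη⟩, hKa⟩ := hK
  have hlogK : 0 < log K := log_pos (by linarith)
  set R := ∑ m ∈ range K, |r m|
  have hR (m : ℕ) (hm : m < K) : r m ≤ R :=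
    (le_abs_self _).trans (single_le_sum (fun i _ => abs_nonneg (r i)) (mem_range.2 hm))
  have hR0 : 0 ≤ R := sum_nonneg fun i _ => abs_nonneg (r i)
  set T := R * (K + h / (1 - h)) / (1 - h)
  have hT : 0 ≤ η₂ * T := by
    have : 0 < 1 - h := by linarith
    positivity
  set A := |r K| * K / log K + 2 * (η₂ * T + C) + 1 with hA_def
  have hrK0 : 0 ≤ |r K| * K / log K := by have := abs_nonneg (r K); positivity
  have hrK : |r K| * K / log K ≤ A - 1 := by linarith
  have hAT : η₂ * T + C ≤ A / 2 := by linarith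
  have hA : 0 < A := by linarith
  refine ⟨A, hA, K, le_mul_log_div_of_le_rec hη₂ h0 h1 (by rw [← mul_div_assoc]; linarith) hrec
    (by exact_mod_cast (by linarith : (1 : ℝ) ≤ K)) hKη (fun x hx => ha x (by linarith)) hR0 hR
    hA.le hAT ?_⟩
  rw [div_le_iff₀ hlogK] at hrK
  rw [le_div_iff₀ (by linarith)]
  nlinarith [le_abs_self (r K)]

theorem sum_Icc_two_eq_sum_Ico_one (h : ℝ) (r : ℕ → ℝ) (k : ℕ) :
    ∑ i ∈ Icc 2 k, h ^ (i - 1) * r (k - i) = ∑ j ∈ Ico 1 k, h ^ j * r (k - 1 - j) := by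
  rw [← Finset.Ico_add_one_right_eq_Icc, ← sum_Ico_add' _ 1 k 1]
  simp [Nat.sub_sub, add_comm]

theorem stmt8_general (η₁ η₂ h₁ C : ℝ) (hη₂ : 0 < η₂)
    (hh₁0 : 0 < h₁) (hh₁1 : h₁ < 1) (hC : 0 < C)
    (r : ℕ → ℝ)
    (ε : ℕ → ℝ) (hε : ∀ k : ℕ, 1 ≤ k → |ε k| ≤ C / (k : ℝ) ^ 2)
    (hrec : ∀ k : ℕ, 1 ≤ k →
      r k = (1 - η₁ / (k : ℝ)) * r (k - 1)
          + (η₂ / (k : ℝ)) * ∑ i ∈ Finset.Icc 2 k, h₁ ^ (i - 1) * r (k - i)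
          + ε k)
    (hη : η₁ - η₂ * h₁ / (1 - h₁) = 1) :
    ∃ C' : ℝ, 0 < C' ∧ ∃ K : ℕ, ∀ k : ℕ, K ≤ k → r k ≤ C' * Real.log k / (k : ℝ) := by
  refine exists_le_mul_log_div_of_le_rec hη₂.le hh₁0.le hh₁1 hC.le hη fun k hk => ?_
  rw [hrec k hk, sum_Icc_two_eq_sum_Ico_one]
  linarith [le_abs_self (ε k), hε k hk]

/-- for the convolution-type recursion
`r_k = (1 − η₁/k) r_{k−1} + (η₂/k) ∑_{i=2}^k h₁^{i−1} r_{k−i} + ε_k` with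
`|ε_k| ≤ C/k²`, if `η = η₁ − η₂h₁/(1−h₁) = 1`, then `r_k = O((ln k)/k)`. -/
theorem stmt8 (η₁ η₂ h₁ C : ℝ) (hη₁ : 0 < η₁) (hη₂ : 0 < η₂)
    (hh₁0 : 0 < h₁) (hh₁1 : h₁ < 1) (hC : 0 < C)
    (r : ℕ → ℝ) (hr0 : 0 < r 0) (hrnn : ∀ k, 0 ≤ r k)
    (ε : ℕ → ℝ) (hε : ∀ k : ℕ, 1 ≤ k → |ε k| ≤ C / (k : ℝ) ^ 2)
    (hrec : ∀ k : ℕ, 1 ≤ k →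
      r k = (1 - η₁ / (k : ℝ)) * r (k - 1)
          + (η₂ / (k : ℝ)) * ∑ i ∈ Finset.Icc 2 k, h₁ ^ (i - 1) * r (k - i)
          + ε k)
    (hη : η₁ - η₂ * h₁ / (1 - h₁) = 1) :
    ∃ C' : ℝ, 0 < C' ∧ ∃ K : ℕ, ∀ k : ℕ, K ≤ k → r k ≤ C' * Real.log k / (k : ℝ) :=
  stmt8_general η₁ η₂ h₁ C hη₂ hh₁0 hh₁1 hC r ε hε hrec hη
end

section
/- Let η > 0 and let (r_k)_{k≥0} be a sequence of nonnegative real numbers satisfying r_k = (1 − η/k) r_{k−1} + ε_k for all k ≥ 1, where |ε_k| ≤ C/k² for some constant C > 0. Then: if 0 < η < 1, r_k = O(1/k^η); if η = 1, r_k = O((ln k)/k); and if η > 1, r_k = O(1/k). -/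
/-!
Discrete comparison principle: once `η ≤ n + 1` the coefficient `1 - η / (n + 1)` is
nonnegative, so any `φ` with `φ (n + 1) ≥ (1 - η / (n + 1)) φ n + C / (n + 1) ^ 2` that lies
above `r` at some index stays above it. Such a `φ` is obtained as a large multiple of an
eventually positive `ψ` whose step gains at least `δ / (n + 1) ^ 2` with `δ > 0`:
`ψ n = 1 / n` with `δ = η - 1` for `η > 1`, `ψ n = log n / n` with `δ = 1` for `η = 1`
(as `log (n + 1) - log n ≥ 1 / (n + 1)`), and `ψ n = n ^ (-η) - B / n` for `η < 1`, where the
correction `- B / n` gains `B (1 - η) / (n (n + 1))`, which for `B (1 - η) ≥ 1 + η` pays for the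
second-order loss of `n ^ (-η)` given by Bernoulli's inequality.
-/

open Filter Real

theorem le_of_le_of_supersolution {a b r φ : ℕ → ℝ} {K : ℕ}
    (hr : ∀ n ≥ K, r (n + 1) ≤ a n * r n + b n)
    (hφ : ∀ n ≥ K, a n * φ n + b n ≤ φ (n + 1))
    (ha : ∀ n ≥ K, 0 ≤ a n) (hK : r K ≤ φ K) :
    ∀ k ≥ K, r k ≤ φ k := by
  intro k hk
  induction k, hk using Nat.le_induction with
  | base => exact hK
  | succ n hn ih =>
    calc r (n + 1) ≤ a n * r n + b n := hr n hn
      _ ≤ a n * φ n + b n := by gcongr; exact ha n hn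
      _ ≤ φ (n + 1) := hφ n hn

theorem succ_le_of_recursion {η C : ℝ} {r ε : ℕ → ℝ}
    (hε : ∀ k : ℕ, 1 ≤ k → |ε k| ≤ C / (k : ℝ) ^ 2)
    (hrec : ∀ k : ℕ, 1 ≤ k → r k = (1 - η / (k : ℝ)) * r (k - 1) + ε k) (n : ℕ) :
    r (n + 1) ≤ (1 - η / (n + 1)) * r n + C / (n + 1) ^ 2 := by
  have h := hrec (n + 1) n.succ_pos
  have hε' := hε (n + 1) n.succ_pos
  push_cast at h hε'
  linarith [le_abs_self (ε (n + 1))]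

theorem exists_le_mul_of_supersolution {η C δ : ℝ} {r ψ : ℕ → ℝ} (hδ : 0 < δ)
    (hr : ∀ n : ℕ, r (n + 1) ≤ (1 - η / (n + 1)) * r n + C / (n + 1) ^ 2)
    (hψ : ∀ᶠ n : ℕ in atTop, (1 - η / (n + 1)) * ψ n + δ / (n + 1) ^ 2 ≤ ψ (n + 1))
    (hψ_pos : ∀ᶠ n : ℕ in atTop, 0 < ψ n) :
    ∃ M : ℝ, 0 < M ∧ ∃ K : ℕ, ∀ k ≥ K, r k ≤ M * ψ k := by
  have hη : ∀ᶠ n : ℕ in atTop, η ≤ n + 1 :=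
    (tendsto_natCast_atTop_atTop.eventually_ge_atTop η).mono fun n hn => by linarith
  obtain ⟨K, hK⟩ := eventually_atTop.1 (hψ.and (hψ_pos.and hη))
  set M := max 1 (max (C / δ) (r K / ψ K))
  have hM1 : 1 ≤ M := le_max_left _ _
  have hCM : C ≤ M * δ := (div_le_iff₀ hδ).1 ((le_max_left _ _).trans (le_max_right _ _))
  have hrM : r K ≤ M * ψ K :=
    (div_le_iff₀ (hK K le_rfl).2.1).1 ((le_max_right _ _).trans (le_max_right _ _))
  refine ⟨M, by linarith, K, le_of_le_of_supersolution (fun n _ => hr n) (fun n hn => ?_)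
    (fun n hn => ?_) hrM⟩
  · obtain ⟨hψn, -, -⟩ := hK n hn
    calc (1 - η / (n + 1)) * (M * ψ n) + C / (n + 1) ^ 2
        = M * ((1 - η / (n + 1)) * ψ n) + C / (n + 1) ^ 2 := by ring
      _ ≤ M * ((1 - η / (n + 1)) * ψ n) + M * δ / (n + 1) ^ 2 := by gcongr
      _ = M * ((1 - η / (n + 1)) * ψ n + δ / (n + 1) ^ 2) := by ring
      _ ≤ M * ψ (n + 1) := by gcongr
  · exact sub_nonneg.2 ((div_le_one (by positivity)).2 (hK n hn).2.2)

theorem rpow_add_one_le {x η : ℝ} (hx : 0 < x) (hη0 : 0 ≤ η) (hη1 : η ≤ 1) :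
    (x + 1) ^ η ≤ x ^ η * (1 + η / x) := by
  have hs : -1 ≤ 1 / x := by have := one_div_pos.2 hx; linarith
  calc (x + 1) ^ η = x ^ η * (1 + 1 / x) ^ η := by
        rw [← mul_rpow hx.le (by positivity)]; field_simp
    _ ≤ x ^ η * (1 + η / x) := by
        gcongr
        simpa [div_eq_mul_inv] using rpow_one_add_le_one_add_mul_self hs hη0 hη1

theorem supersolution_rpow {η B : ℝ} (hη0 : 0 < η) (hη1 : η < 1) (hB : 1 + η ≤ B * (1 - η))
    {n : ℕ} (hn : 1 ≤ n) :
    (1 - η / (n + 1)) * (1 / (n : ℝ) ^ η - B / n) + 1 / (n + 1) ^ 2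
      ≤ 1 / ((n + 1 : ℕ) : ℝ) ^ η - B / (n + 1 : ℕ) := by
  push_cast
  have hn1 : (1 : ℝ) ≤ n := by exact_mod_cast hn
  have hn0 : (0 : ℝ) < n := by linarith
  set a := (n : ℝ) ^ η
  have ha : 1 ≤ a := one_le_rpow hn1 hη0.le
  have hb : 1 / a * (1 - η / n) ≤ 1 / ((n : ℝ) + 1) ^ η := by
    have ht : 0 ≤ η / n := by positivity
    calc 1 / a * (1 - η / n) ≤ 1 / a * (1 / (1 + η / n)) := by
          gcongr
          rw [le_div_iff₀ (by positivity)]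
          nlinarith
      _ = 1 / (a * (1 + η / n)) := by rw [one_div_mul_one_div]
      _ ≤ 1 / ((n : ℝ) + 1) ^ η :=
          one_div_le_one_div_of_le (by positivity) (rpow_add_one_le hn0 hη0.le hη1.le)
  have key : 1 / a * (1 - η / n) - B / (n + 1) - (1 - η / (n + 1)) * (1 / a - B / n)
      = (B * (1 - η) - η / a) / (n * (n + 1)) := by
    field_simp; ring
  have hηa : η / a ≤ η := div_le_self hη0.le ha
  have h2 : 1 / ((n : ℝ) + 1) ^ 2 ≤ 1 / (n * (n + 1)) := by
    gcongr; nlinarith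
  have h3 : 1 / (n * (n + 1)) ≤ (B * (1 - η) - η / a) / (n * (n + 1)) := by
    gcongr; linarith
  linarith

theorem supersolution_log {n : ℕ} (hn : 1 ≤ n) :
    (1 - 1 / (n + 1)) * (log n / n) + 1 / (n + 1) ^ 2 ≤ log ((n + 1 : ℕ) : ℝ) / (n + 1 : ℕ) := by
  push_cast
  have hn0 : (0 : ℝ) < n := by exact_mod_cast hn
  have hlog : 1 / ((n : ℝ) + 1) ≤ log (n + 1) - log n := by
    rw [← log_div (by positivity) hn0.ne']
    calc 1 / ((n : ℝ) + 1) = 1 - ((n + 1) / (n : ℝ))⁻¹ := by field_simp; ring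
      _ ≤ log ((n + 1) / n) := one_sub_inv_le_log_of_pos (by positivity)
  have e : (1 - 1 / ((n : ℝ) + 1)) * (log n / n) = log n / (n + 1) := by
    field_simp; ring
  have : 1 / ((n : ℝ) + 1) ^ 2 ≤ (log (n + 1) - log n) / (n + 1) := by
    rw [sq, ← div_div]; gcongr
  rw [e]
  rw [sub_div] at this
  linarith

theorem supersolution_inv {η : ℝ} (hη : 1 ≤ η) {n : ℕ} (hn : 1 ≤ n) :
    (1 - η / (n + 1)) * (1 / (n : ℝ)) + (η - 1) / (n + 1) ^ 2 ≤ 1 / ((n + 1 : ℕ) : ℝ) := by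
  push_cast
  have hn0 : (0 : ℝ) < n := by exact_mod_cast hn
  rw [← sub_nonneg]
  have e : 1 / ((n : ℝ) + 1) - ((1 - η / (n + 1)) * (1 / n) + (η - 1) / (n + 1) ^ 2)
      = (η - 1) / (n * (n + 1) ^ 2) := by
    field_simp; ring
  rw [e]
  exact div_nonneg (by linarith) (by positivity)

theorem eventually_one_div_rpow_sub_pos {η : ℝ} (hη : η < 1) (B : ℝ) :
    ∀ᶠ n : ℕ in atTop, 0 < 1 / (n : ℝ) ^ η - B / n := by
  have h := (tendsto_rpow_atTop (sub_pos.2 hη)).comp tendsto_natCast_atTop_atTop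
  filter_upwards [h.eventually_gt_atTop B, eventually_gt_atTop 0] with n hB hn
  have hn' : (0 : ℝ) < n := by exact_mod_cast hn
  rw [Function.comp_apply, rpow_sub hn', rpow_one, lt_div_iff₀ (by positivity)] at hB
  rw [sub_pos, div_lt_div_iff₀ hn' (by positivity)]
  linarith

theorem eventually_log_div_pos : ∀ᶠ n : ℕ in atTop, 0 < log n / n := by
  filter_upwards [eventually_ge_atTop 2] with n hn
  have hn' : (2 : ℝ) ≤ n := by exact_mod_cast hn
  exact div_pos (log_pos (by linarith)) (by linarith)

theorem stmt11_general (η C : ℝ) (hη : 0 < η)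
    (r : ℕ → ℝ)
    (ε : ℕ → ℝ) (hε : ∀ k : ℕ, 1 ≤ k → |ε k| ≤ C / (k : ℝ) ^ 2)
    (hrec : ∀ k : ℕ, 1 ≤ k → r k = (1 - η / (k : ℝ)) * r (k - 1) + ε k) :
    (η < 1 → ∃ C' : ℝ, 0 < C' ∧ ∃ K : ℕ, ∀ k : ℕ, K ≤ k → r k ≤ C' / (k : ℝ) ^ η)
    ∧ (η = 1 → ∃ C' : ℝ, 0 < C' ∧ ∃ K : ℕ, ∀ k : ℕ, K ≤ k →
        r k ≤ C' * Real.log k / (k : ℝ))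
    ∧ (1 < η → ∃ C' : ℝ, 0 < C' ∧ ∃ K : ℕ, ∀ k : ℕ, K ≤ k → r k ≤ C' / (k : ℝ)) := by
  have hr := succ_le_of_recursion hε hrec
  refine ⟨fun hη1 => ?_, fun hη1 => ?_, fun hη1 => ?_⟩
  · have h1η : 0 < 1 - η := sub_pos.2 hη1
    set B := (1 + η) / (1 - η)
    have hB : 1 + η ≤ B * (1 - η) := (div_mul_cancel₀ _ h1η.ne').ge
    obtain ⟨M, hM, K, hK⟩ := exists_le_mul_of_supersolution one_pos hr
      ((eventually_ge_atTop 1).mono fun n => supersolution_rpow hη hη1 hB)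
      (eventually_one_div_rpow_sub_pos hη1 B)
    refine ⟨M, hM, K, fun k hk => (hK k hk).trans ?_⟩
    calc M * (1 / (k : ℝ) ^ η - B / k) ≤ M * (1 / (k : ℝ) ^ η) := by
          gcongr; exact sub_le_self _ (by positivity)
      _ = M / (k : ℝ) ^ η := mul_one_div _ _
  · subst hη1
    obtain ⟨M, hM, K, hK⟩ := exists_le_mul_of_supersolution one_pos hr
      ((eventually_ge_atTop 1).mono fun n => supersolution_log) eventually_log_div_pos
    exact ⟨M, hM, K, fun k hk => mul_div_assoc M (log k) k ▸ hK k hk⟩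
  · obtain ⟨M, hM, K, hK⟩ := exists_le_mul_of_supersolution (sub_pos.2 hη1) hr
      ((eventually_ge_atTop 1).mono fun n => supersolution_inv hη1.le)
      (eventually_gt_atTop 0 |>.mono fun n hn => by positivity)
    exact ⟨M, hM, K, fun k hk => mul_one_div M (k : ℝ) ▸ hK k hk⟩

/-- for the first-order recursion `r_k = (1 − η/k) r_{k−1} + ε_k`
with `|ε_k| ≤ C/k²`: if `0 < η < 1` then `r_k = O(1/k^η)`; if `η = 1` then
`r_k = O((ln k)/k)`; and if `η > 1` then `r_k = O(1/k)`. -/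
theorem stmt11 (η C : ℝ) (hη : 0 < η) (hC : 0 < C)
    (r : ℕ → ℝ) (hrnn : ∀ k, 0 ≤ r k)
    (ε : ℕ → ℝ) (hε : ∀ k : ℕ, 1 ≤ k → |ε k| ≤ C / (k : ℝ) ^ 2)
    (hrec : ∀ k : ℕ, 1 ≤ k → r k = (1 - η / (k : ℝ)) * r (k - 1) + ε k) :
    (η < 1 → ∃ C' : ℝ, 0 < C' ∧ ∃ K : ℕ, ∀ k : ℕ, K ≤ k → r k ≤ C' / (k : ℝ) ^ η)
    ∧ (η = 1 → ∃ C' : ℝ, 0 < C' ∧ ∃ K : ℕ, ∀ k : ℕ, K ≤ k →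
        r k ≤ C' * Real.log k / (k : ℝ))
    ∧ (1 < η → ∃ C' : ℝ, 0 < C' ∧ ∃ K : ℕ, ∀ k : ℕ, K ≤ k → r k ≤ C' / (k : ℝ)) :=
  stmt11_general η C hη r ε hε hrec
end
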